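/- arXiv:2501.13613 — 7 statements merged into one kernel-verified Lean document; each statement's English description precedes it below -/
import Mathlib

section
/- Let $R$ be a Noetherian ring of prime characteristic $p$, let $I, J$ be ideals of $R$ with $I \subseteq \sqrt{J}$, and suppose $I$ is generated by $\mu$ elements. For $e \geq 0$ define $\nu_I^J(p^e) = \max\{t \in \mathbb{N} \mid I^t \not\subseteq J^{[p^e]}\}$, where $J^{[p^e]}$ is the ideal generated by $p^e$-th powers of elements of $J$. Then for all integers $e_1, e_2 \geq 0$ one has $\nu_I^J(p^{e_1+e_2})/p^{e_1+e_2} - \nu_I^J(p^{e_1})/p^{e_1} \leq \mu/p^{e_1}$. -/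
/-! If `I = (f₁, …, f_μ)` and `q = p ^ e₂`, then `I ^ (q * k + μ * (q - 1) + 1) ⊆ (I ^ (k + 1))^[q]`:
in a monomial of that degree in the `fᵢ`, writing each exponent as `q * bᵢ + rᵢ` with `rᵢ < q`
forces `∑ bᵢ ≥ k + 1`. With `k = ν(p^e₁)`, so that `I ^ (k + 1) ⊆ J^[p^e₁]`, this puts
`I ^ (q * ν(p^e₁) + μ * (q - 1) + 1)` inside `J^[p^(e₁+e₂)]`, hence
`ν(p^(e₁+e₂)) ≤ p^e₂ * (ν(p^e₁) + μ)`; now divide by `p^(e₁+e₂)`. -/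

namespace Ideal

variable {R : Type*} [CommRing R]

theorem sup_pow_le_of_forall_pow_mul_pow_le {I J K : Ideal R} {n : ℕ}
    (h : ∀ i ≤ n, I ^ i * J ^ (n - i) ≤ K) : (I ⊔ J) ^ n ≤ K := by
  rw [← add_eq_sup, add_pow, sum_eq_sup]
  exact Finset.sup_le fun i hi =>
    mul_le_left.trans (h i (Nat.lt_succ_iff.mp (Finset.mem_range.mp hi)))

section PowMap

variable {q : ℕ} {φ : R →+* R}

theorem map_span_singleton_pow (hφ : ∀ x, φ x = x ^ q) (f : R) (k : ℕ) :
    map φ (span {f} ^ k) = span {f} ^ (q * k) := by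
  rw [span_singleton_pow, span_singleton_pow, map_span, Set.image_singleton, hφ, ← pow_mul,
    mul_comm]

theorem span_singleton_sup_pow_le_map_pow (hq : 1 ≤ q) (hφ : ∀ x, φ x = x ^ q) (f : R)
    {A : Ideal R} {d : ℕ} (hA : ∀ k, A ^ (q * k + d + 1) ≤ map φ (A ^ (k + 1))) (k : ℕ) :
    (span {f} ⊔ A) ^ (q * k + (d + (q - 1)) + 1) ≤ map φ ((span {f} ⊔ A) ^ (k + 1)) := by
  set F : Ideal R := span {f}
  refine sup_pow_le_of_forall_pow_mul_pow_le fun i hi => ?_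
  by_cases hik : q * (k + 1) ≤ i
  · calc F ^ i * A ^ _ ≤ F ^ (q * (k + 1)) := mul_le_left.trans (pow_le_pow_right hik)
      _ = map φ (F ^ (k + 1)) := (map_span_singleton_pow hφ f _).symm
      _ ≤ map φ ((F ⊔ A) ^ (k + 1)) := map_mono (pow_right_mono le_sup_left _)
  · -- with `i = q * b + r`, `r < q`: `f ^ (q * b) = φ (f ^ b)`, and the exponent of `A` is
    -- still at least `q * (k - b) + d + 1`
    set b := i / q
    have hqb : q * b ≤ i := Nat.mul_div_le i q
    have hb : b ≤ k := by
      by_contra!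
      exact hik ((Nat.mul_le_mul_left q this).trans hqb)
    have hAi : A ^ (q * k + (d + (q - 1)) + 1 - i) ≤ map φ (A ^ (k - b + 1)) := by
      refine (pow_le_pow_right ?_).trans (hA (k - b))
      have hr : i < q * b + q := Nat.lt_mul_div_self_add (by omega)
      have : q * (k - b) = q * k - q * b := Nat.mul_sub q k b
      have : q * b ≤ q * k := Nat.mul_le_mul_left q hb
      omega
    calc F ^ i * A ^ _ ≤ F ^ (q * b) * map φ (A ^ (k - b + 1)) :=
          mul_mono (pow_le_pow_right hqb) hAi
      _ = map φ (F ^ b * A ^ (k - b + 1)) := by rw [Ideal.map_mul, map_span_singleton_pow hφ]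
      _ ≤ map φ ((F ⊔ A) ^ b * (F ⊔ A) ^ (k - b + 1)) :=
          map_mono (mul_mono (pow_right_mono le_sup_left _) (pow_right_mono le_sup_right _))
      _ = map φ ((F ⊔ A) ^ (k + 1)) := by rw [← pow_add]; congr 2; omega

theorem span_finset_pow_le_map_pow (hq : 1 ≤ q) (hφ : ∀ x, φ x = x ^ q) (s : Finset R)
    (k : ℕ) : span (s : Set R) ^ (q * k + s.card * (q - 1) + 1) ≤ map φ (span s ^ (k + 1)) := by
  classical
  induction s using Finset.induction_on generalizing k with
  | empty => simp
  | @insert f t hft ih =>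
    rw [Finset.coe_insert, span_insert, Finset.card_insert_of_notMem hft, add_one_mul]
    exact span_singleton_sup_pow_le_map_pow hq hφ f ih k

end PowMap

section Threshold

variable {I K : Ideal R} {n : ℕ}

theorem pow_succ_le_of_isGreatest (h : IsGreatest {t | ¬ I ^ t ≤ K} n) : I ^ (n + 1) ≤ K := by
  by_contra h'
  exact (h.2 h').not_gt n.lt_succ_self

theorem lt_of_isGreatest_of_pow_le (h : IsGreatest {t | ¬ I ^ t ≤ K} n) {m : ℕ}
    (hm : I ^ m ≤ K) : n < m := by
  by_contra! hmn
  exact h.1 ((pow_le_pow_right hmn).trans hm)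

end Threshold

theorem map_iterateFrobenius_map (p : ℕ) [ExpChar R p] (J : Ideal R) (e₁ e₂ : ℕ) :
    map (iterateFrobenius R p e₂) (map (iterateFrobenius R p e₁) J)
      = map (iterateFrobenius R p (e₁ + e₂)) J := by
  rw [map_map, add_comm, iterateFrobenius_add]

end Ideal

theorem div_mul_sub_div_le {a b m Q : ℕ} {P : ℝ} (hP : 0 ≤ P) (h : a ≤ Q * (b + m)) :
    (a : ℝ) / (P * Q) - b / P ≤ m / P := by
  rcases Nat.eq_zero_or_pos Q with rfl | hQ
  · obtain rfl : a = 0 := by simpa using h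
    have : 0 ≤ (b : ℝ) / P := by positivity
    have : 0 ≤ (m : ℝ) / P := by positivity
    rw [Nat.cast_zero, zero_div]
    linarith
  have : (a : ℝ) / (P * Q) ≤ b / P + m / P :=
    calc (a : ℝ) / (P * Q) ≤ (Q * (b + m) : ℕ) / (P * Q) := by gcongr
      _ = b / P + m / P := by
        push_cast
        rw [mul_comm P, mul_div_mul_left _ _ (by positivity), add_div]
  linarith

theorem defect_fpt_stmt0_general {R : Type*} [CommRing R]
    (p : ℕ) (hp : p.Prime) [CharP R p]
    (I J : Ideal R)
    (μ : ℕ) (s : Finset R) (hcard : s.card = μ) (hgen : Ideal.span (s : Set R) = I)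
    (ν : ℕ → ℕ)
    (hν : ∀ e : ℕ, IsGreatest
      {t : ℕ | ¬ I ^ t ≤ Ideal.span ((fun x => x ^ p ^ e) '' (J : Set R))} (ν e))
    (e₁ e₂ : ℕ) :
    (ν (e₁ + e₂) : ℝ) / (p : ℝ) ^ (e₁ + e₂) - (ν e₁ : ℝ) / (p : ℝ) ^ e₁
      ≤ (μ : ℝ) / (p : ℝ) ^ e₁ := by
  have : ExpChar R p := ExpChar.prime hp
  have hq : 1 ≤ p ^ e₂ := Nat.one_le_pow _ _ hp.pos
  -- `J^[p^e]` is, by definition of `Ideal.map`, the image of `J` under the `e`-th Frobenius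
  have hν_lt : ν (e₁ + e₂) < p ^ e₂ * ν e₁ + μ * (p ^ e₂ - 1) + 1 := by
    refine Ideal.lt_of_isGreatest_of_pow_le (hν _) ?_
    calc I ^ _ ≤ Ideal.map (iterateFrobenius R p e₂) (I ^ (ν e₁ + 1)) := by
          rw [← hgen, ← hcard]
          exact Ideal.span_finset_pow_le_map_pow hq (iterateFrobenius_def p e₂) s _
      _ ≤ Ideal.map (iterateFrobenius R p e₂) (Ideal.map (iterateFrobenius R p e₁) J) :=
          Ideal.map_mono (Ideal.pow_succ_le_of_isGreatest (hν e₁))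
      _ = _ := Ideal.map_iterateFrobenius_map p J e₁ e₂
  have hν_le : ν (e₁ + e₂) ≤ p ^ e₂ * (ν e₁ + μ) := by
    have : μ * (p ^ e₂ - 1) ≤ μ * p ^ e₂ := Nat.mul_le_mul_left _ (Nat.sub_le _ _)
    rw [mul_add, mul_comm (p ^ e₂) μ]
    omega
  have := div_mul_sub_div_le (P := (p : ℝ) ^ e₁) (by positivity) hν_le
  rwa [pow_add, ← Nat.cast_pow p e₂]

/-- The F-threshold numerator `ν_I^J(p^e)` satisfies the convergence estimate
`ν(p^{e₁+e₂})/p^{e₁+e₂} - ν(p^{e₁})/p^{e₁} ≤ μ/p^{e₁}` when `I` is generated by `μ` elements. -/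
theorem defect_fpt_stmt0 {R : Type*} [CommRing R] [IsNoetherianRing R]
    (p : ℕ) (hp : p.Prime) [CharP R p]
    (I J : Ideal R) (hIJ : I ≤ J.radical)
    (μ : ℕ) (s : Finset R) (hcard : s.card = μ) (hgen : Ideal.span (s : Set R) = I)
    (ν : ℕ → ℕ)
    (hν : ∀ e : ℕ, IsGreatest
      {t : ℕ | ¬ I ^ t ≤ Ideal.span ((fun x => x ^ p ^ e) '' (J : Set R))} (ν e))
    (e₁ e₂ : ℕ) :
    (ν (e₁ + e₂) : ℝ) / (p : ℝ) ^ (e₁ + e₂) - (ν e₁ : ℝ) / (p : ℝ) ^ e₁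
      ≤ (μ : ℝ) / (p : ℝ) ^ e₁ :=
  defect_fpt_stmt0_general p hp I J μ s hcard hgen ν hν e₁ e₂
end

section
/- Let $S$ be a commutative ring of prime characteristic $p$, let $I \subseteq S$ be an ideal, and let $f \in S$. Then for every $e \geq 0$ one has $f^{p^e - 1}\,(I^{[p^e]} :_S I) + (I + fS)^{[p^e]} \subseteq (I + fS)^{[p^e]} :_S (I + fS)$. -/
/-! With `q = p ^ e` and `J = I + fS`, the colon `J^[q] : J` is `(J^[q] : I) ∩ (J^[q] : f)`.
The factor `f^(q-1)` alone already multiplies `f` into `J^[q]`, and `I^[q] : I` multiplies `I`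
into `I^[q] ⊆ J^[q]`; no property of the characteristic is involved. -/

namespace Ideal

variable {R : Type*} [CommRing R]

/-- `I^[n]`; for `n = p ^ e` in characteristic `p` this is the Frobenius power `I^[p^e]`. -/
def bracketPow (I : Ideal R) (n : ℕ) : Ideal R :=
  span ((fun x => x ^ n) '' (I : Set R))

lemma bracketPow_mono {I J : Ideal R} (h : I ≤ J) (n : ℕ) : I.bracketPow n ≤ J.bracketPow n :=
  span_mono (Set.image_mono h)

lemma pow_mem_bracketPow {I : Ideal R} {x : R} (hx : x ∈ I) (n : ℕ) : x ^ n ∈ I.bracketPow n :=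
  subset_span ⟨x, hx, rfl⟩

lemma pow_pred_mul_mem_bracketPow {I : Ideal R} {x : R} (hx : x ∈ I) (n : ℕ) :
    x ^ (n - 1) * x ∈ I.bracketPow n := by
  cases n with
  | zero =>
    -- `0 - 1 = 0` in `ℕ`, and `I^[0] = ⊤` because it contains `0 ^ 0 = 1`.
    simpa using mul_mem_left _ x (pow_mem_bracketPow I.zero_mem 0)
  | succ n => simpa [← pow_succ] using pow_mem_bracketPow hx (n + 1)

lemma colon_sup (K I J : Ideal R) : K.colon ↑(I ⊔ J) = K.colon I ⊓ K.colon J := by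
  rw [← span_eq I, ← span_eq J, ← span_union, colon_span, Submodule.colon_union, span_eq, span_eq]

end Ideal

open Ideal in
theorem defect_fpt_stmt3_general {S : Type*} [CommRing S] (p : ℕ)
    (I : Ideal S) (f : S) (e : ℕ) :
    Ideal.span {f ^ (p ^ e - 1)} * (Ideal.span ((fun x => x ^ p ^ e) '' (I : Set S))).colon I
      + Ideal.span ((fun x => x ^ p ^ e) '' ((I + Ideal.span {f} : Ideal S) : Set S))
    ≤ (Ideal.span ((fun x => x ^ p ^ e) '' ((I + Ideal.span {f} : Ideal S) : Set S))).colon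
        (I + Ideal.span {f}) := by
  set q := p ^ e
  set J : Ideal S := I ⊔ span {f}
  have hfJ : f ∈ J := Submodule.mem_sup_right (mem_span_singleton_self f)
  refine sup_le ?_ le_colon
  change _ ≤ (J.bracketPow q).colon J
  rw [colon_sup, colon_span]
  refine le_inf (mul_le_right.trans (Submodule.colon_mono (bracketPow_mono le_sup_left q) le_rfl))
    (mul_le_left.trans ?_)
  rw [span_singleton_le_iff_mem, Submodule.mem_colon_singleton, smul_eq_mul]
  exact pow_pred_mul_mem_bracketPow hfJ q

/-- Easy containment in the Fedder-type colon formula for a hypersurface section: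
`f^{p^e-1} (I^{[p^e]} : I) + (I + fS)^{[p^e]} ⊆ (I + fS)^{[p^e]} : (I + fS)`. -/
theorem defect_fpt_stmt3 {S : Type*} [CommRing S] (p : ℕ) (hp : p.Prime) [CharP S p]
    (I : Ideal S) (f : S) (e : ℕ) :
    Ideal.span {f ^ (p ^ e - 1)} * (Ideal.span ((fun x => x ^ p ^ e) '' (I : Set S))).colon I
      + Ideal.span ((fun x => x ^ p ^ e) '' ((I + Ideal.span {f} : Ideal S) : Set S))
    ≤ (Ideal.span ((fun x => x ^ p ^ e) '' ((I + Ideal.span {f} : Ideal S) : Set S))).colon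
        (I + Ideal.span {f}) :=
  defect_fpt_stmt3_general p I f e
end

section
/- Let $S$ be a commutative ring of prime characteristic $p$, and let $I, J$ be ideals of $S$. Then for all $e \geq 0$, $(I :_S J)^{[p^e]} \subseteq I^{[p^e]} :_S J^{[p^e]}$; moreover if $S$ is a regular ring (so that the Frobenius endomorphism is flat), then equality $(I :_S J)^{[p^e]} = I^{[p^e]} :_S J^{[p^e]}$ holds whenever $J$ is finitely generated. -/
/-!
The Frobenius power `K^[p^e]` is, by definition, the extension of `K` along the `e`-th Frobenius
`F^e`. Extending ideals along any ring map sends `I : J` into `IS : JS`. Along a flat map the two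
agree when `J = (x₁, …, xₙ)`: `I : J` is the kernel of `R → (R/I)ⁿ`, `r ↦ (r xᵢ)ᵢ`, flat base
change preserves this kernel, and `S ⊗ R/I = S/IS`.
-/

open TensorProduct

namespace Ideal

section Colon

variable {R S : Type*} [CommRing R] [CommRing S]

theorem map_colon_le (φ : R →+* S) (I J : Ideal R) :
    (I.colon J).map φ ≤ (I.map φ).colon (J.map φ) := by
  rw [map_le_iff_le_comap]
  intro r hr
  rw [mem_comap, Ideal.map, Ideal.map, colon_span, Submodule.mem_colon]
  rintro _ ⟨j, hj, rfl⟩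
  exact subset_span ⟨r * j, Submodule.mem_colon.mp hr j hj, map_mul φ r j⟩

theorem colon_span_range_eq_ker {ι : Type*} (I : Ideal R) (x : ι → R) :
    I.colon (span (Set.range x)) =
      LinearMap.ker (LinearMap.pi fun i ↦ I.mkQ ∘ₗ LinearMap.toSpanSingleton R R (x i)) := by
  ext r
  simp [Submodule.mem_colon, funext_iff, -map_mul, Quotient.eq_zero_iff_mem]

end Colon

section FlatBaseChange

variable {R S : Type*} [CommRing R] [CommRing S] [Algebra R S]

theorem rid_lTensor_subtype_mem_map (I : Ideal R) (y : S ⊗[R] I) :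
    TensorProduct.rid R S (LinearMap.lTensor S I.subtype y) ∈ I.map (algebraMap R S) := by
  induction y using TensorProduct.induction_on with
  | zero => simp
  | tmul t i =>
    simpa [Algebra.smul_def] using mul_mem_right t _ (mem_map_of_mem (algebraMap R S) i.2)
  | add a b ha hb => simpa only [map_add] using add_mem ha hb

variable [Module.Flat R S] {M : Type*} [AddCommGroup M] [Module R M]

theorem mem_map_ker_iff_tmul_eq_zero (f : R →ₗ[R] M) (s : S) :
    s ∈ Ideal.map (algebraMap R S) (LinearMap.ker f) ↔ s ⊗ₜ[R] f 1 = 0 := by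
  constructor
  · intro hs
    suffices Ideal.map (algebraMap R S) (LinearMap.ker f) ≤
        LinearMap.ker (LinearMap.toSpanSingleton S (S ⊗[R] M) (1 ⊗ₜ f 1)) by
      simpa [smul_tmul'] using this hs
    rw [map_le_iff_le_comap]
    intro r hr
    rw [mem_comap, LinearMap.mem_ker, LinearMap.toSpanSingleton_apply, algebraMap_smul,
      ← tmul_smul, ← map_smul, smul_eq_mul, mul_one, LinearMap.mem_ker.mp hr, tmul_zero]
  · intro h
    have hexact := Module.Flat.lTensor_exact S f.exact_subtype_ker_map
    obtain ⟨y, hy⟩ := (hexact (s ⊗ₜ[R] 1)).mp (by simpa using h)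
    simpa [hy] using rid_lTensor_subtype_mem_map (LinearMap.ker f) y

theorem tmul_mk_eq_zero_iff (I : Ideal R) (s : S) (r : R) :
    s ⊗ₜ[R] Quotient.mk I r = 0 ↔ s * algebraMap R S r ∈ I.map (algebraMap R S) := by
  have key := mem_map_ker_iff_tmul_eq_zero I.mkQ (s * algebraMap R S r)
  rw [Submodule.ker_mkQ] at key
  rw [key, mul_comm, ← Algebra.smul_def, smul_tmul, ← map_smul, smul_eq_mul, mul_one]
  rfl

theorem map_colon_span_range_of_flat {ι : Type*} [Fintype ι] (I : Ideal R) (x : ι → R) :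
    (I.colon (span (Set.range x))).map (algebraMap R S) =
      (I.map (algebraMap R S)).colon ((span (Set.range x)).map (algebraMap R S)) := by
  classical
  ext s
  rw [colon_span_range_eq_ker, mem_map_ker_iff_tmul_eq_zero, map_span, ← Set.range_comp,
    colon_span, Submodule.mem_colon, Set.forall_mem_range,
    ← (TensorProduct.piRight R S S fun _ : ι ↦ R ⧸ I).map_eq_zero_iff]
  simp [funext_iff, tmul_mk_eq_zero_iff]

end FlatBaseChange

theorem map_colon_of_flat {R S : Type*} [CommRing R] [CommRing S] (φ : R →+* S) (hφ : φ.Flat)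
    (I J : Ideal R) (hJ : J.FG) : (I.colon J).map φ = (I.map φ).colon (J.map φ) := by
  algebraize [φ]
  obtain ⟨n, x, rfl⟩ := Submodule.fg_iff_exists_fin_generating_family.mp hJ
  exact map_colon_span_range_of_flat I x

end Ideal

theorem defect_fpt_stmt6_general {S : Type*} [CommRing S] (p : ℕ)
    [ExpChar S p] (I J : Ideal S) (e : ℕ) :
    (Ideal.span ((fun x => x ^ p ^ e) '' ((I.colon J : Ideal S) : Set S))
      ≤ (Ideal.span ((fun x => x ^ p ^ e) '' (I : Set S))).colon
          (Ideal.span ((fun x => x ^ p ^ e) '' (J : Set S)))) ∧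
    (RingHom.Flat (iterateFrobenius S p e) → J.FG →
      Ideal.span ((fun x => x ^ p ^ e) '' ((I.colon J : Ideal S) : Set S))
        = (Ideal.span ((fun x => x ^ p ^ e) '' (I : Set S))).colon
            (Ideal.span ((fun x => x ^ p ^ e) '' (J : Set S)))) :=
  ⟨Ideal.map_colon_le (iterateFrobenius S p e) I J,
    fun hflat hJ ↦ Ideal.map_colon_of_flat (iterateFrobenius S p e) hflat I J hJ⟩

/-- Frobenius powers and colon ideals: the containment
`(I : J)^{[p^e]} ⊆ I^{[p^e]} : J^{[p^e]}` always holds, and when the (iterated) Frobenius of `S`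
is flat (e.g. `S` regular) and `J` is finitely generated, equality holds. -/
theorem defect_fpt_stmt6 {S : Type*} [CommRing S] (p : ℕ) (hp : p.Prime) [CharP S p]
    [ExpChar S p] (I J : Ideal S) (e : ℕ) :
    (Ideal.span ((fun x => x ^ p ^ e) '' ((I.colon J : Ideal S) : Set S))
      ≤ (Ideal.span ((fun x => x ^ p ^ e) '' (I : Set S))).colon
          (Ideal.span ((fun x => x ^ p ^ e) '' (J : Set S)))) ∧
    (RingHom.Flat (iterateFrobenius S p e) → J.FG →
      Ideal.span ((fun x => x ^ p ^ e) '' ((I.colon J : Ideal S) : Set S))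
        = (Ideal.span ((fun x => x ^ p ^ e) '' (I : Set S))).colon
            (Ideal.span ((fun x => x ^ p ^ e) '' (J : Set S)))) :=
  defect_fpt_stmt6_general p I J e
end

section
/- Let $p$ be a prime, $\mu \in \mathbb{N}$, and let $(\nu_e)_{e \geq 0}$ be a sequence of natural numbers such that for all $e_1, e_2 \geq 0$ one has $\nu_{e_1+e_2}/p^{e_1+e_2} - \nu_{e_1}/p^{e_1} \leq \mu/p^{e_1}$ and $\nu_{e_1+e_2} \geq p^{e_2}\nu_{e_1}$. Then the sequence $\nu_e/p^e$ converges to a limit $L$, and for every $e$ one has $0 \leq L - \nu_e/p^e \leq \mu/p^e$. -/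
/-- Abstract convergence estimate for F-thresholds: uniform control `|L - ν_e/p^e| ≤ μ/p^e`. -/
theorem defect_fpt_stmt10 (p : ℕ) (hp : p.Prime) (μ : ℕ) (ν : ℕ → ℕ)
    (h1 : ∀ e₁ e₂ : ℕ, (ν (e₁ + e₂) : ℝ) / (p : ℝ) ^ (e₁ + e₂) - (ν e₁ : ℝ) / (p : ℝ) ^ e₁
      ≤ (μ : ℝ) / (p : ℝ) ^ e₁)
    (h2 : ∀ e₁ e₂ : ℕ, p ^ e₂ * ν e₁ ≤ ν (e₁ + e₂)) :
    ∃ L : ℝ, Filter.Tendsto (fun e : ℕ => (ν e : ℝ) / (p : ℝ) ^ e) Filter.atTop (nhds L) ∧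
      ∀ e : ℕ, 0 ≤ L - (ν e : ℝ) / (p : ℝ) ^ e ∧
        L - (ν e : ℝ) / (p : ℝ) ^ e ≤ (μ : ℝ) / (p : ℝ) ^ e := by
  set f : ℕ → ℝ := fun e => (ν e : ℝ) / (p : ℝ) ^ e with hf
  have hp1 : (1 : ℝ) < (p : ℝ) := by exact_mod_cast hp.one_lt
  have hppos : (0 : ℝ) < (p : ℝ) := by linarith
  have hpe : ∀ e : ℕ, (0 : ℝ) < (p : ℝ) ^ e := fun e => pow_pos hppos e
  have hmono : Monotone f := by
    intro a b hab
    obtain ⟨c, rfl⟩ := Nat.exists_eq_add_of_le hab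
    have := h2 a c
    have hcast : ((p : ℝ)) ^ c * (ν a : ℝ) ≤ (ν (a + c) : ℝ) := by exact_mod_cast this
    simp only [hf]
    rw [div_le_div_iff₀ (hpe a) (hpe (a + c)), pow_add]
    nlinarith [hpe a, hpe c, (ν a).cast_nonneg (α := ℝ)]
  have hbdd : BddAbove (Set.range f) := by
    refine ⟨f 0 + μ, ?_⟩
    rintro x ⟨e, rfl⟩
    have := h1 0 e
    simp only [Nat.zero_add, pow_zero, div_one] at this
    simp only [hf]
    simp only [hf, pow_zero, div_one]
    linarith
  refine ⟨⨆ e, f e, tendsto_atTop_ciSup hmono hbdd, fun e => ?_⟩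
  constructor
  · have := le_ciSup hbdd e
    linarith
  · have hsup : (⨆ n, f n) ≤ f e + (μ : ℝ) / (p : ℝ) ^ e := by
      refine ciSup_le fun n => ?_
      rcases le_or_gt n e with h | h
      · have := hmono h
        have hμ : (0 : ℝ) ≤ (μ : ℝ) / (p : ℝ) ^ e :=
          div_nonneg (Nat.cast_nonneg μ) (le_of_lt (hpe e))
        linarith
      · obtain ⟨c, rfl⟩ := Nat.exists_eq_add_of_le h.le
        have := h1 e c
        simp only [hf] at *
        linarith
    linarith
end

section
/- Let $(R, \mathfrak{m}, k)$ be a Noetherian local ring of dimension $d$, let $J \subseteq \mathfrak{m}$ be an ideal generated by elements $x_1, \ldots, x_d$, and suppose $\mathfrak{m} = J + (y_1, \ldots, y_t)$ and $\mathfrak{m}^{c+1} \subseteq J$ for some integers $t, c \geq 0$. Then the length of $R/J$ satisfies $\ell_R(R/J) \leq \binom{t + c}{c}$. -/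
/-!
Filter `R ⧸ J` by the images `F i` of the powers `(y)^i`. Since `𝔪 ⊆ J + (y)`, each layer
`F i / F (i+1)` is killed by `𝔪`, hence is an `R ⧸ 𝔪`-vector space spanned by the images of the
monomials of degree `i` in the `y`s, and its length is at most their number `multichoose t i`.
Since `(y)^(c+1) ⊆ 𝔪^(c+1) ⊆ J`, the filtration reaches `0` at step `c + 1`, so additivity of
length gives `ℓ(R ⧸ J) ≤ ∑_{i ≤ c} multichoose t i = (t+c).choose c`.
-/

open Set Submodule Module

theorem Ideal.span_range_pow {R ι : Type*} [CommRing R] (y : ι → R) (n : ℕ) :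
    Ideal.span (range y) ^ n = Ideal.span (range fun s : Sym ι n => (s.1.map y).prod) := by
  induction n with
  | zero =>
    rw [pow_zero, Ideal.one_eq_top, eq_comm, Ideal.eq_top_iff_one]
    exact Ideal.subset_span ⟨Sym.nil, by simp⟩
  | succ n ih =>
    rw [pow_succ, ih, Ideal.span_mul_span']
    congr 1
    ext z
    simp only [Set.mem_mul, Set.mem_range]
    constructor
    · rintro ⟨_, ⟨s, rfl⟩, _, ⟨j, rfl⟩, rfl⟩
      exact ⟨j ::ₛ s, by simp [Sym.coe_cons, mul_comm]⟩
    · rintro ⟨s, rfl⟩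
      obtain ⟨j, s, rfl⟩ := s.exists_eq_cons_of_succ
      exact ⟨_, ⟨s, rfl⟩, _, ⟨j, rfl⟩, by simp [Sym.coe_cons, mul_comm]⟩

section

variable {R M : Type*} [CommRing R] [AddCommGroup M] [Module R M]

theorem Module.length_le_card_of_isTorsionBySet {I : Ideal R} [I.IsMaximal]
    (hM : IsTorsionBySet R M I) {ι : Type*} [Fintype ι] (v : ι → M)
    (hv : span R (range v) = ⊤) : length R M ≤ Fintype.card ι := by
  let := Ideal.Quotient.field I
  let := hM.module
  have := hM.isScalarTower (S := R)
  have hv' : span (R ⧸ I) (range v) = ⊤ :=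
    eq_top_iff.2 fun x _ => span_le_restrictScalars R (R ⧸ I) _ (hv ▸ mem_top)
  have : Module.Finite (R ⧸ I) M := ⟨hv' ▸ fg_span (finite_range v)⟩
  rw [length_eq_of_surjective (R := R ⧸ I) Ideal.Quotient.mk_surjective, length_eq_finrank,
    ← finrank_top, ← hv']
  exact_mod_cast finrank_range_le_card v

theorem Submodule.length_eq_length_add_length_quotient {N P : Submodule R M} (h : N ≤ P) :
    length R P = length R N + length R (P ⧸ N.comap P.subtype) :=
  length_eq_add_of_exact (inclusion h) (mkQ _) (inclusion_injective h) (mkQ_surjective _)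
    (LinearMap.exact_iff.2 (by rw [ker_mkQ, range_inclusion]))

theorem Submodule.length_eq_sum_of_antitone (F : ℕ → Submodule R M) (hF : ∀ i, F (i + 1) ≤ F i)
    {n : ℕ} (hn : F n = ⊥) :
    length R (F 0) = ∑ i ∈ Finset.range n, length R (F i ⧸ (F (i + 1)).comap (F i).subtype) := by
  induction n generalizing F with
  | zero => rw [hn, length_bot, Finset.sum_range_zero]
  | succ n ih =>
    rw [length_eq_length_add_length_quotient (hF 0), ih (fun i => F (i + 1)) (fun i => hF _) hn,
      Finset.sum_range_succ' _ n, add_comm]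

theorem Submodule.length_quotient_le_card {I : Ideal R} [I.IsMaximal] {N P : Submodule R M}
    (hIP : I • P ≤ N) {ι : Type*} [Fintype ι] (v : ι → M) (hv : span R (range v) = P) :
    length R (P ⧸ N.comap P.subtype) ≤ Fintype.card ι := by
  have hI : IsTorsionBySet R (P ⧸ N.comap P.subtype) I :=
    (isTorsionBySet_quotient_iff _ _).2 fun x r hr => hIP (smul_mem_smul hr x.2)
  subst hv
  let w : ι → span R (range v) := fun k => ⟨v k, subset_span (mem_range_self k)⟩
  have hw : span R (range w) = ⊤ := by
    apply map_injective_of_injective (span R (range v)).injective_subtype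
    rw [map_span, ← range_comp, map_subtype_top]
    rfl
  refine length_le_card_of_isTorsionBySet hI (mkQ _ ∘ w) ?_
  rw [range_comp, ← map_span, hw, map_top, range_mkQ]

theorem Ideal.length_quotient_le_choose {𝔪 J : Ideal R} [𝔪.IsMaximal] {ι : Type*} [Fintype ι]
    (y : ι → R) {c : ℕ} (hm : 𝔪 ≤ J ⊔ Ideal.span (range y))
    (hc : Ideal.span (range y) ^ (c + 1) ≤ J) :
    length R (R ⧸ J) ≤ (Fintype.card ι + c).choose c := by
  classical
  set I := Ideal.span (range y)
  let F : ℕ → Submodule R (R ⧸ J) := fun i => Submodule.map J.mkQ (I ^ i)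
  have hF_span (i : ℕ) :
      Submodule.span R (range (J.mkQ ∘ fun s : Sym ι i => (s.1.map y).prod)) = F i := by
    rw [range_comp, ← Submodule.map_span, ← Ideal.span, ← span_range_pow]
  have hF_smul (i : ℕ) : 𝔪 • F i ≤ F (i + 1) := by
    have hideal : 𝔪 * I ^ i ≤ J ⊔ I ^ (i + 1) := calc
      𝔪 * I ^ i ≤ (J ⊔ I) * I ^ i := mul_mono_left hm
      _ = J * I ^ i ⊔ I ^ (i + 1) := by rw [sup_mul, pow_succ']
      _ ≤ J ⊔ I ^ (i + 1) := sup_le_sup_right Ideal.mul_le_left _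
    rw [← Submodule.map_smul'', smul_eq_mul]
    refine (Submodule.map_mono hideal).trans ?_
    rw [Submodule.map_sup, mkQ_map_self, bot_sup_eq]
  have hF_zero : F 0 = ⊤ := by simp [F, Ideal.one_eq_top]
  have hF_last : F (c + 1) = ⊥ := by
    rw [eq_bot_iff, Submodule.map_le_iff_le_comap, Submodule.comap_bot, ker_mkQ]
    exact hc
  calc length R (R ⧸ J) = length R (F 0) := by rw [hF_zero, length_top]
    _ = ∑ i ∈ Finset.range (c + 1), length R (F i ⧸ (F (i + 1)).comap (F i).subtype) :=
      length_eq_sum_of_antitone F (fun i => Submodule.map_mono (pow_le_pow_right i.le_succ)) hF_last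
    _ ≤ ∑ i ∈ Finset.range (c + 1), (Fintype.card (Sym ι i) : ℕ∞) :=
      Finset.sum_le_sum fun i _ => length_quotient_le_card (hF_smul i) _ (hF_span i)
    _ = (Fintype.card ι + c).choose c := by
      simp only [Sym.card_sym_eq_multichoose]
      rw [← Nat.cast_sum, Nat.sum_range_multichoose, add_comm, Nat.choose_symm_add]

end

theorem defect_fpt_stmt12_general {R : Type*} [CommRing R] [IsLocalRing R]
    (J : Ideal R)
    (t c : ℕ) (y : Fin t → R)
    (hm : IsLocalRing.maximalIdeal R = J + Ideal.span (Set.range y))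
    (hc : IsLocalRing.maximalIdeal R ^ (c + 1) ≤ J) :
    Order.krullDim (Submodule R (R ⧸ J)) ≤ ((t + c).choose c : ℕ) := by
  have hy : Ideal.span (Set.range y) ≤ IsLocalRing.maximalIdeal R := by
    rw [hm, Submodule.add_eq_sup]
    exact le_sup_right
  have hlength := Ideal.length_quotient_le_choose y hm.le ((Ideal.pow_right_mono hy _).trans hc)
  rw [Fintype.card_fin] at hlength
  rw [← Module.coe_length]
  exact_mod_cast hlength

/-- Multiplicity-type bound: if `J = (x₁,…,x_d)`, `𝔪 = J + (y₁,…,y_t)` and `𝔪^{c+1} ⊆ J`, then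
the length of `R/J` (expressed as the Krull dimension of its submodule lattice) is at most
`(t+c).choose c`. -/
theorem defect_fpt_stmt12 {R : Type*} [CommRing R] [IsNoetherianRing R] [IsLocalRing R]
    (d : ℕ) (hdim : ringKrullDim R = d)
    (x : Fin d → R) (J : Ideal R) (hJ : J = Ideal.span (Set.range x))
    (hJm : J ≤ IsLocalRing.maximalIdeal R)
    (t c : ℕ) (y : Fin t → R)
    (hm : IsLocalRing.maximalIdeal R = J + Ideal.span (Set.range y))
    (hc : IsLocalRing.maximalIdeal R ^ (c + 1) ≤ J) :
    Order.krullDim (Submodule R (R ⧸ J)) ≤ ((t + c).choose c : ℕ) :=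
  defect_fpt_stmt12_general J t c y hm hc
end

section
/- Let $A$ be a commutative ring, $S$ an $A$-algebra, and for $n \geq 0$ define $D^n_{S|A}$ inductively by $D^0_{S|A} = \{\text{multiplication maps } s \cdot (-) : s \in S\}$ and $D^n_{S|A} = \{\delta \in \mathrm{End}_A(S) \mid [\delta, s] \in D^{n-1}_{S|A} \text{ for all } s \in S\}$, where $[\delta, s] = \delta \circ (s \cdot -) - (s \cdot -) \circ \delta$. Then for any prime ideal $\mathfrak{p} \subseteq S$ and any $n \geq 1$, the set $\mathfrak{p}^{\langle n \rangle} := \{s \in S \mid \delta(s) \in \mathfrak{p} \text{ for all } \delta \in D^{n-1}_{S|A}\}$ is a $\mathfrak{p}$-primary ideal of $S$ containing $\mathfrak{p}^n$. -/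
/-- `DiffOp A S n` is the set of `A`-linear differential operators on `S` of order at most `n`,
defined inductively via commutators with multiplication operators. -/
def DiffOp (A S : Type*) [CommRing A] [CommRing S] [Algebra A S] : ℕ → Set (S →ₗ[A] S)
  | 0 => Set.range fun s : S => LinearMap.mulLeft A s
  | n + 1 => {δ | ∀ s : S,
      δ ∘ₗ LinearMap.mulLeft A s - LinearMap.mulLeft A s ∘ₗ δ ∈ DiffOp A S n}

section aux

variable (A : Type*) {S : Type*} [CommRing A] [CommRing S] [Algebra A S]

lemma DiffOp.comm_apply (δ : S →ₗ[A] S) (s f : S) :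
    (δ ∘ₗ LinearMap.mulLeft A s - LinearMap.mulLeft A s ∘ₗ δ) f = δ (s * f) - s * δ f := by
  simp

lemma DiffOp.mulLeft_mem (n : ℕ) : ∀ s : S, LinearMap.mulLeft A s ∈ DiffOp A S n := by
  induction n with
  | zero => exact fun s => ⟨s, rfl⟩
  | succ n ih =>
    intro s t
    have h : LinearMap.mulLeft A s ∘ₗ LinearMap.mulLeft A t
        - LinearMap.mulLeft A t ∘ₗ LinearMap.mulLeft A s = LinearMap.mulLeft A 0 := by
      ext x; simp [mul_left_comm]
    rw [h]
    exact ih 0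

lemma DiffOp.mono (n : ℕ) : DiffOp A S n ⊆ DiffOp A S (n + 1) := by
  induction n with
  | zero =>
    rintro _ ⟨s, rfl⟩ t
    have h : LinearMap.mulLeft A s ∘ₗ LinearMap.mulLeft A t
        - LinearMap.mulLeft A t ∘ₗ LinearMap.mulLeft A s = LinearMap.mulLeft A 0 := by
      ext x; simp [mul_left_comm]
    rw [h]
    exact ⟨0, rfl⟩
  | succ n ih =>
    intro δ hδ s
    exact ih (hδ s)

variable (𝔭 : Ideal S)

/-- The differential power as a set. -/
def dpowSet (m : ℕ) : Set S := {s : S | ∀ δ ∈ DiffOp A S m, δ s ∈ 𝔭}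

lemma dpowSet_mono (m : ℕ) : dpowSet A 𝔭 (m + 1) ⊆ dpowSet A 𝔭 m :=
  fun f hf δ hδ => hf δ (DiffOp.mono A m hδ)

lemma dpowSet_subset (m : ℕ) : dpowSet A 𝔭 m ⊆ (𝔭 : Set S) := by
  intro f hf
  have := hf (LinearMap.mulLeft A 1) (DiffOp.mulLeft_mem A m 1)
  simpa using this

lemma dpowSet_smul (m : ℕ) : ∀ s f : S, f ∈ dpowSet A 𝔭 m → s * f ∈ dpowSet A 𝔭 m := by
  induction m with
  | zero =>
    rintro s f hf _ ⟨t, rfl⟩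
    have hfp : f ∈ 𝔭 := dpowSet_subset A 𝔭 0 hf
    simpa [mul_assoc] using 𝔭.mul_mem_left (t * s) hfp
  | succ m ih =>
    intro s f hf δ hδ
    have h1 : (δ ∘ₗ LinearMap.mulLeft A s - LinearMap.mulLeft A s ∘ₗ δ) f ∈ 𝔭 :=
      dpowSet_mono A 𝔭 m hf _ (hδ s)
    rw [DiffOp.comm_apply] at h1
    have h2 : s * δ f ∈ 𝔭 := 𝔭.mul_mem_left s (hf δ hδ)
    have := 𝔭.add_mem h1 h2
    simpa using this

/-- The differential power as an ideal. -/
def dpowIdeal (m : ℕ) : Ideal S where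
  carrier := dpowSet A 𝔭 m
  zero_mem' := fun δ _ => by simpa using 𝔭.zero_mem
  add_mem' := fun {a b} ha hb δ hδ => by
    simpa [map_add] using 𝔭.add_mem (ha δ hδ) (hb δ hδ)
  smul_mem' := fun c x hx => by
    simpa [smul_eq_mul] using dpowSet_smul A 𝔭 _ c x hx

lemma dpowSet_primary (m : ℕ) :
    ∀ s f : S, s * f ∈ dpowSet A 𝔭 m → s ∉ 𝔭 → (h𝔭 : 𝔭.IsPrime) → f ∈ dpowSet A 𝔭 m := by
  induction m with
  | zero =>
    rintro s f hsf hs h𝔭 _ ⟨t, rfl⟩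
    have : s * f ∈ 𝔭 := dpowSet_subset A 𝔭 0 hsf
    have hf : f ∈ 𝔭 := ((h𝔭.mem_or_mem this).resolve_left hs)
    exact 𝔭.mul_mem_left t hf
  | succ m ih =>
    intro s f hsf hs h𝔭 δ hδ
    have hf' : f ∈ dpowSet A 𝔭 m := ih s f (dpowSet_mono A 𝔭 m hsf) hs h𝔭
    have h1 : (δ ∘ₗ LinearMap.mulLeft A s - LinearMap.mulLeft A s ∘ₗ δ) f ∈ 𝔭 :=
      hf' _ (hδ s)
    rw [DiffOp.comm_apply] at h1
    have h2 : δ (s * f) ∈ 𝔭 := hsf δ hδ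
    have h3 : s * δ f ∈ 𝔭 := by
      have := 𝔭.sub_mem h2 h1
      simpa using this
    exact (h𝔭.mem_or_mem h3).resolve_left hs

lemma dpow_pow_le (m : ℕ) : 𝔭 ^ (m + 1) ≤ dpowIdeal A 𝔭 m := by
  induction m with
  | zero =>
    intro f hf
    rw [pow_one] at hf
    rintro _ ⟨t, rfl⟩
    simpa using 𝔭.mul_mem_left t hf
  | succ m ih =>
    rw [pow_succ']
    rw [Ideal.mul_le]
    intro p hp g hg δ hδ
    have hgm : g ∈ dpowSet A 𝔭 m := ih hg
    have h1 : (δ ∘ₗ LinearMap.mulLeft A p - LinearMap.mulLeft A p ∘ₗ δ) g ∈ 𝔭 :=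
      hgm _ (hδ p)
    rw [DiffOp.comm_apply] at h1
    have h2 : p * δ g ∈ 𝔭 := 𝔭.mul_mem_right _ hp
    simpa using 𝔭.add_mem h1 h2

end aux

/-- The `n`-th differential power `𝔭⟨n⟩ = {s | δ s ∈ 𝔭 for all δ of order ≤ n-1}` of a prime
ideal `𝔭` is a `𝔭`-primary ideal containing `𝔭^n`. -/
theorem defect_fpt_stmt13 {A S : Type*} [CommRing A] [CommRing S] [Algebra A S]
    (𝔭 : Ideal S) (h𝔭 : 𝔭.IsPrime) (n : ℕ) (hn : 1 ≤ n) :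
    ∃ Q : Ideal S,
      (Q : Set S) = {s : S | ∀ δ ∈ DiffOp A S (n - 1), δ s ∈ 𝔭} ∧
      Q.IsPrimary ∧ Q.radical = 𝔭 ∧ 𝔭 ^ n ≤ Q := by
  obtain ⟨m, rfl⟩ : ∃ m, n = m + 1 := ⟨n - 1, (Nat.succ_pred_eq_of_pos hn).symm⟩
  have hle : dpowIdeal A 𝔭 m ≤ 𝔭 := dpowSet_subset A 𝔭 m
  have hpow : 𝔭 ^ (m + 1) ≤ dpowIdeal A 𝔭 m := dpow_pow_le A 𝔭 m
  have hrad : (dpowIdeal A 𝔭 m).radical = 𝔭 := by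
    apply le_antisymm
    · calc (dpowIdeal A 𝔭 m).radical ≤ 𝔭.radical := Ideal.radical_mono hle
        _ = 𝔭 := h𝔭.radical
    · intro x hx
      exact Ideal.mem_radical_iff.mpr ⟨m + 1, hpow (Ideal.pow_mem_pow hx _)⟩
  refine ⟨dpowIdeal A 𝔭 m, rfl, Ideal.isPrimary_iff.mpr ⟨?_, ?_⟩, hrad, hpow⟩
  · intro h
    exact h𝔭.ne_top (top_le_iff.mp (h ▸ hle))
  · intro x y hxy
    by_cases hy : y ∈ 𝔭
    · right; rw [hrad]; exact hy
    · left
      have h' : y * x ∈ dpowSet A 𝔭 m := by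
        rw [mul_comm]; exact hxy
      exact dpowSet_primary A 𝔭 m y x h' hy h𝔭
end

section
/- Let $(R, \mathfrak{m})$ be an F-finite F-pure local ring of prime characteristic $p$, so that there is a surjective $R$-linear map $\psi : F_*(R) \to R$. Define $b(p^e) = \max\{t \mid \mathfrak{m}^t \not\subseteq I_e(R)\}$, where $I_e(R)$ is the splitting ideal. Then $p \cdot b(p^e) \leq b(p^{e+1})$ for all $e \geq 0$. -/
/-- For an F-finite F-pure local ring, the numbers `b(p^e) = max{t | 𝔪^t ⊄ I_e(R)}` satisfy
`p · b(p^e) ≤ b(p^{e+1})`. -/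
theorem defect_fpt_stmt17 {R : Type*} [CommRing R] [IsLocalRing R]
    (p : ℕ) (hp : p.Prime) [CharP R p]
    (hFF : ∀ e : ℕ, ∃ s : Finset R, ∀ x : R, ∃ a : R → R,
      x = ∑ i ∈ s, a i ^ p ^ e * i)
    (hFpure : ∃ ψ : R →+ R, (∀ r x : R, ψ (r ^ p * x) = r * ψ x) ∧ Function.Surjective ψ)
    (Ie : ℕ → Ideal R)
    (hIe : ∀ e : ℕ, (Ie e : Set R) =
      {f : R | ∀ ψ : R →+ R, (∀ r x : R, ψ (r ^ p ^ e * x) = r * ψ x) →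
        ψ f ∈ IsLocalRing.maximalIdeal R})
    (b : ℕ → ℕ)
    (hb : ∀ e : ℕ, IsGreatest {t : ℕ | ¬ IsLocalRing.maximalIdeal R ^ t ≤ Ie e} (b e))
    (e : ℕ) :
    p * b e ≤ b (e + 1) := by
  obtain ⟨ψ, hψ, hsurj⟩ := hFpure
  obtain ⟨u, hu⟩ := hsurj 1
  have key : ∀ t : ℕ, (IsLocalRing.maximalIdeal R) ^ (p * t) ≤ Ie (e + 1) →
      (IsLocalRing.maximalIdeal R) ^ t ≤ Ie e := by
    intro t ht f hf
    have h1 : f ^ p * u ∈ Ie (e + 1) := by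
      apply ht
      have h2 : f ^ p ∈ (IsLocalRing.maximalIdeal R ^ t) ^ p := Ideal.pow_mem_pow hf p
      rw [← pow_mul, mul_comm t p] at h2
      exact Ideal.mul_mem_right u _ h2
    have hmem : f ∈ (Ie e : Set R) := by
      rw [hIe e]
      intro φ hφ
      have hcomp : ∀ r x : R, (φ.comp ψ) (r ^ p ^ (e + 1) * x) = r * (φ.comp ψ) x := by
        intro r x
        simp only [AddMonoidHom.comp_apply]
        rw [pow_succ, pow_mul, hψ, hφ]
      have h2 : f ^ p * u ∈ (Ie (e + 1) : Set R) := h1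
      rw [hIe (e + 1)] at h2
      have h3 := h2 (φ.comp ψ) hcomp
      simpa [AddMonoidHom.comp_apply, hψ f u, hu] using h3
    exact hmem
  have hne : ¬ (IsLocalRing.maximalIdeal R) ^ (p * b e) ≤ Ie (e + 1) := fun h =>
    (hb e).1 (key _ h)
  exact (hb (e + 1)).2 hne
end
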